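/- arXiv:2210.02814 — 2 statements merged into one kernel-verified Lean document; each statement's English description precedes it below -/
import Mathlib

section
/- Let 𝔩 be a field. The dual complex Δ₋•, with Δ₋⁻ⁱ = Hom_Λ(Δ₊^{i-1}, Λ) for i ≥ 1 and differentials the duals of those of Δ₊•, has H⁻¹(Δ₋•) ≅ 𝔩 and Hⁱ(Δ₋•) = 0 for all i < -1. -/
open LinearMap

/-- The dual complex Δ₋•, living in degrees ≤ -1: Δ₋⁻ⁱ = Hom_Λ(Δ₊^{i-1}, Λ) is the
2-dimensional space with Λ-generator e* (coordinates (a,b) ↔ a·e* + b·ξe*), and the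
dual differentials send e* ↦ ξe*, ξe* ↦ 0, i.e. (a,b) ↦ (0,a); the differential
leaving degree -1 (into the zero term in degree 0) is zero, as are all differentials
outside degrees ≤ -2.  Then H⁻¹(Δ₋•) ≅ 𝔩 and Hⁱ(Δ₋•) = 0 for all i < -1. -/
theorem stmt_12 (𝔩 : Type*) [Field 𝔩]
    (f : (𝔩 × 𝔩) →ₗ[𝔩] (𝔩 × 𝔩)) (hf : ∀ a b : 𝔩, f (a, b) = (0, a))
    (d : ℤ → ((𝔩 × 𝔩) →ₗ[𝔩] (𝔩 × 𝔩)))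
    (hd : ∀ i, d i = if i ≤ -2 then f else 0) :
    Nonempty ((↥(ker (d (-1))) ⧸
        Submodule.comap (ker (d (-1))).subtype (range (d (-1 - 1)))) ≃ₗ[𝔩] 𝔩) ∧
    (∀ i : ℤ, i < -1 → ker (d i) = range (d (i - 1))) := by
  have hfx : ∀ x : 𝔩 × 𝔩, f x = (0, x.1) := fun x => hf x.1 x.2
  have hmemker : ∀ x : 𝔩 × 𝔩, x ∈ ker f ↔ x.1 = 0 := by
    intro x
    rw [mem_ker, hfx, Prod.ext_iff]
    simp [eq_comm]
  have hmemrange : ∀ x : 𝔩 × 𝔩, x ∈ range f ↔ x.1 = 0 := by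
    intro x
    constructor
    · rintro ⟨y, rfl⟩; rw [hfx]
    · intro h
      exact ⟨(x.2, 0), by rw [hfx]; exact Prod.ext h.symm rfl⟩
  have hkerf : ker f = range f := by
    ext x; rw [hmemker, hmemrange]
  constructor
  · have hd1 : d (-1) = 0 := by rw [hd, if_neg (by omega)]
    have hd2 : d (-1 - 1) = f := by rw [hd, if_pos (by omega)]
    set K := ker (d (-1))
    let g : K →ₗ[𝔩] 𝔩 := (LinearMap.fst 𝔩 𝔩 𝔩).comp K.subtype
    have hsurj : Function.Surjective g := by
      intro a
      have hmem : ((a, 0) : 𝔩 × 𝔩) ∈ K := by simp [K, hd1]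
      exact ⟨⟨(a, 0), hmem⟩, rfl⟩
    have hker : ker g = Submodule.comap K.subtype (range (d (-1 - 1))) := by
      ext x
      rw [mem_ker, Submodule.mem_comap, hd2, hmemrange]
      rfl
    exact ⟨(Submodule.quotEquivOfEq _ _ hker.symm).trans
      (g.quotKerEquivOfSurjective hsurj)⟩
  · intro i hi
    have hdi : d i = f := by rw [hd, if_pos (by omega)]
    have hdi1 : d (i - 1) = f := by rw [hd, if_pos (by omega)]
    rw [hdi, hdi1, hkerf]
end

section
/- Let 𝔩 be a field. The Janus complex Δ•, obtained by splicing Δ₋• (in degrees ≤ -1) and Δ₊• (in degrees ≥ 0) via the Λ-module map d₋⁻¹ : Δ₋⁻¹ = Λ → Λ(Ξ)[-1] = Δ₊⁰ sending 1 ↦ ξ, is an acyclic complex: Hⁱ(Δ•) = 0 for all i ∈ ℤ. -/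
open LinearMap

/-- The Janus complex Δ•, obtained by splicing the dual complex Δ₋• (degrees ≤ -1)
with the shifted Koszul complex Δ₊• (degrees ≥ 0) via the Λ-module map
d₋⁻¹ : Δ₋⁻¹ = Λ → Λ(Ξ)[-1] = Δ₊⁰ sending 1 ↦ ξ, is acyclic: Hⁱ(Δ•) = 0 for all i ∈ ℤ.
In the 𝔩-bases (1, ξ) of Δ₋⁻¹·(e*) and e, ξe of each Δ₊ⁱ (and e*, ξe* of each Δ₋ⁱ),
every differential of Δ•, including the splicing map (1 ↦ ξe, ξ ↦ ξ·ξe = 0),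
is given by (a, b) ↦ (0, a). -/
theorem stmt_13 (𝔩 : Type*) [Field 𝔩]
    (d : ℤ → ((𝔩 × 𝔩) →ₗ[𝔩] (𝔩 × 𝔩)))
    (hd : ∀ i, ∀ a b : 𝔩, d i (a, b) = (0, a)) :
    ∀ i : ℤ, ker (d i) = range (d (i - 1)) := by
  intro i
  ext ⟨a, b⟩
  constructor
  · intro h
    rw [mem_ker, hd i] at h
    have ha : a = 0 := congrArg Prod.snd h
    exact ⟨(b, 0), by rw [hd, ha]⟩
  · rintro ⟨⟨x, y⟩, hx⟩
    rw [hd] at hx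
    have : a = 0 := (congrArg Prod.fst hx).symm
    rw [mem_ker, hd i, this]
    rfl
end
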